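/- For the amplitude damping channel A_η on qubits with η ∈ [0, 1/2], the channel is degradable: there exists a CPTP map D such that D ∘ A_η = A_ηᶜ; explicitly, A_ηᶜ equals A_{1−η} up to relabeling, and A_{(1−2η)/(1−η)} ∘ A_η = A_{1−η}, so D can be taken to be A_{(1−2η)/(1−η)}, establishing degradability of A_η for η ≤ 1/2. -/
import Mathlib


open scoped Matrix ComplexOrder

/-- A map between matrix algebras is completely positive and trace preserving:
every finite-dimensional ampliation `Φ ⊗ id_k` preserves positive semidefiniteness,
and traces are preserved. -/
def IsCPTP {A B : Type*} [Fintype A] [DecidableEq A] [Fintype B] [DecidableEq B]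
    (Φ : Matrix A A ℂ → Matrix B B ℂ) : Prop :=
  (∀ (k : ℕ) (M : Matrix (A × Fin k) (A × Fin k) ℂ), M.PosSemidef →
      (Matrix.of fun p q : B × Fin k =>
        Φ (Matrix.of fun x y : A => M (x, p.2) (y, q.2)) p.1 q.1).PosSemidef) ∧
  (∀ ρ, (Φ ρ).trace = ρ.trace)

noncomputable def AD0 (η : ℝ) : Matrix (Fin 2) (Fin 2) ℂ :=
  !![1, 0; 0, (Real.sqrt (1 - η) : ℂ)]

noncomputable def AD1 (η : ℝ) : Matrix (Fin 2) (Fin 2) ℂ :=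
  !![0, (Real.sqrt η : ℂ); 0, 0]

/-- The qubit amplitude damping channel `A_η`. -/
noncomputable def ampDamp (η : ℝ) (ρ : Matrix (Fin 2) (Fin 2) ℂ) : Matrix (Fin 2) (Fin 2) ℂ :=
  AD0 η * ρ * (AD0 η)ᴴ + AD1 η * ρ * (AD1 η)ᴴ

/-- The Stinespring isometry of `A_η`: `V|0⟩ = |00⟩`, `V|1⟩ = √(1−η)|10⟩ + √η|01⟩`;
first factor = output B, second factor = environment E. -/
noncomputable def ADV (η : ℝ) : Matrix (Fin 2 × Fin 2) (Fin 2) ℂ :=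
  Matrix.of fun p c =>
    if c = 0 then (if p = (0, 0) then 1 else 0)
    else if p = (1, 0) then (Real.sqrt (1 - η) : ℂ)
    else if p = (0, 1) then (Real.sqrt η : ℂ) else 0

/-- Partial trace over the first (output) factor, giving the complementary channel. -/
noncomputable def ptraceB (M : Matrix (Fin 2 × Fin 2) (Fin 2 × Fin 2) ℂ) :
    Matrix (Fin 2) (Fin 2) ℂ :=
  Matrix.of fun i j => ∑ k, M (k, i) (k, j)

/-! ### Auxiliary lemmas -/

lemma ampDamp_eq (η : ℝ) (h0 : 0 ≤ η) (h1 : η ≤ 1) (ρ : Matrix (Fin 2) (Fin 2) ℂ) :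
    ampDamp η ρ = !![ρ 0 0 + (η:ℂ) * ρ 1 1, ((Real.sqrt (1-η) : ℝ):ℂ) * ρ 0 1;
      ((Real.sqrt (1-η) : ℝ):ℂ) * ρ 1 0, ((1:ℂ) - η) * ρ 1 1] := by
  have hs : ((Real.sqrt (1-η) : ℝ):ℂ) * ((Real.sqrt (1-η) : ℝ):ℂ) = (1:ℂ) - η := by
    rw [← Complex.ofReal_mul, Real.mul_self_sqrt (by linarith)]
    push_cast; ring
  have hs' : ((Real.sqrt η : ℝ):ℂ) * ((Real.sqrt η : ℝ):ℂ) = (η:ℂ) := by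
    rw [← Complex.ofReal_mul, Real.mul_self_sqrt h0]
  ext i j
  fin_cases i <;> fin_cases j <;>
    simp [ampDamp, AD0, AD1, Matrix.mul_apply, Matrix.vecMul, dotProduct,
      Fin.sum_univ_two, Matrix.conjTranspose_apply, Complex.conj_ofReal] <;>
    first
    | linear_combination (ρ 1 1) * hs'
    | linear_combination (ρ 1 1) * hs
    | linear_combination (ρ 1 1) * hs + (ρ 1 1) * hs'
    | ring

lemma comp_eq (η : ℝ) (h0 : 0 ≤ η) (h1 : η ≤ 1) (ρ : Matrix (Fin 2) (Fin 2) ℂ) :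
    ptraceB (ADV η * ρ * (ADV η)ᴴ) = ampDamp (1 - η) ρ := by
  have hs : ((Real.sqrt (1-η) : ℝ):ℂ) * ((Real.sqrt (1-η) : ℝ):ℂ) = (1:ℂ) - η := by
    rw [← Complex.ofReal_mul, Real.mul_self_sqrt (by linarith)]; push_cast; ring
  have hs' : ((Real.sqrt η : ℝ):ℂ) * ((Real.sqrt η : ℝ):ℂ) = (η:ℂ) := by
    rw [← Complex.ofReal_mul, Real.mul_self_sqrt h0]
  rw [ampDamp_eq (1-η) (by linarith) (by linarith)]
  ext i j
  fin_cases i <;> fin_cases j <;>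
    simp [ptraceB, ADV, Matrix.mul_apply, Fin.sum_univ_two, Matrix.conjTranspose_apply,
      Complex.conj_ofReal, Prod.ext_iff] <;>
    first
    | linear_combination (ρ 1 1) * hs'
    | linear_combination (ρ 1 1) * hs
    | linear_combination (ρ 1 1) * hs + (ρ 1 1) * hs'
    | ring

lemma comp2 (η : ℝ) (h0 : 0 ≤ η) (h : η ≤ 1/2) (ρ : Matrix (Fin 2) (Fin 2) ℂ) :
    ampDamp ((1 - 2*η)/(1 - η)) (ampDamp η ρ) = ampDamp (1 - η) ρ := by
  have hne : (1:ℝ) - η ≠ 0 := by linarith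
  have h0'' : 0 ≤ (1 - 2*η)/(1 - η) := div_nonneg (by linarith) (by linarith)
  have h1'' : (1 - 2*η)/(1 - η) ≤ 1 := by
    rw [div_le_one (by linarith)]; linarith
  have key2 : (1 - (1 - 2*η)/(1 - η)) * (1 - η) = η := by field_simp; ring
  have hsq : Real.sqrt (1 - (1 - 2*η)/(1 - η)) * Real.sqrt (1 - η) = Real.sqrt η := by
    rw [← Real.sqrt_mul (by linarith), key2]
  have hsqC : ((Real.sqrt (1 - (1 - 2*η)/(1 - η)) : ℝ):ℂ) * ((Real.sqrt (1 - η) : ℝ):ℂ)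
      = ((Real.sqrt η : ℝ):ℂ) := by exact_mod_cast congrArg (fun x : ℝ => (x:ℂ)) hsq
  have hneC : ((1:ℂ) - (η:ℂ)) ≠ 0 := by
    intro hc; apply hne; exact_mod_cast hc
  rw [ampDamp_eq η h0 (by linarith), ampDamp_eq ((1-2*η)/(1-η)) h0'' h1'',
    ampDamp_eq (1-η) (by linarith) (by linarith)]
  ext i j
  fin_cases i <;> fin_cases j <;>
    simp [Prod.ext_iff] <;>
    first
    | linear_combination (ρ 0 1) * hsqC
    | linear_combination (ρ 1 0) * hsqC
    | (push_cast; field_simp; ring)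

open scoped Kronecker in
lemma amp_kron (K : Matrix (Fin 2) (Fin 2) ℂ) (k : ℕ)
    (M : Matrix (Fin 2 × Fin k) (Fin 2 × Fin k) ℂ) :
    (Matrix.of fun p q : Fin 2 × Fin k =>
        (K * (Matrix.of fun x y : Fin 2 => M (x, p.2) (y, q.2)) * Kᴴ) p.1 q.1)
      = (K ⊗ₖ (1 : Matrix (Fin k) (Fin k) ℂ)) * M * (K ⊗ₖ (1 : Matrix (Fin k) (Fin k) ℂ))ᴴ := by
  ext p q
  simp [Matrix.mul_apply, Matrix.conjTranspose_apply, Matrix.kroneckerMap_apply,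
    Fintype.sum_prod_type, Matrix.one_apply, apply_ite (starRingEnd ℂ),
    Finset.mul_sum, Finset.sum_mul, mul_ite, ite_mul, mul_zero, zero_mul]

open scoped Kronecker in
lemma ampDamp_CPTP (η : ℝ) (h0 : 0 ≤ η) (h1 : η ≤ 1) : IsCPTP (ampDamp η) := by
  constructor
  · intro k M hM
    have hrw : (Matrix.of fun p q : Fin 2 × Fin k =>
          ampDamp η (Matrix.of fun x y : Fin 2 => M (x, p.2) (y, q.2)) p.1 q.1)
        = (AD0 η ⊗ₖ (1 : Matrix (Fin k) (Fin k) ℂ)) * M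
            * (AD0 η ⊗ₖ (1 : Matrix (Fin k) (Fin k) ℂ))ᴴ
          + (AD1 η ⊗ₖ (1 : Matrix (Fin k) (Fin k) ℂ)) * M
            * (AD1 η ⊗ₖ (1 : Matrix (Fin k) (Fin k) ℂ))ᴴ := by
      rw [← amp_kron, ← amp_kron]
      ext p q
      simp [ampDamp]
    rw [hrw]
    exact (hM.mul_mul_conjTranspose_same _).add (hM.mul_mul_conjTranspose_same _)
  · intro ρ
    rw [ampDamp_eq η h0 h1]
    simp [Matrix.trace_fin_two]
    ring

/-- For `η ∈ [0, 1/2]` the amplitude damping channel is degradable: the complementary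
channel `A_ηᶜ(ρ) = Tr_B(VρV†)` equals `A_{1−η}`, the composition law
`A_{(1−2η)/(1−η)} ∘ A_η = A_{1−η}` holds, and hence there is a CPTP map `D` with
`D ∘ A_η = A_ηᶜ`. -/
theorem ampDamp_degradable (η : ℝ) (hη0 : 0 ≤ η) (hη : η ≤ 1/2) :
    (∀ ρ : Matrix (Fin 2) (Fin 2) ℂ,
        ptraceB (ADV η * ρ * (ADV η)ᴴ) = ampDamp (1 - η) ρ) ∧
    (∀ ρ : Matrix (Fin 2) (Fin 2) ℂ,
        ampDamp ((1 - 2*η)/(1 - η)) (ampDamp η ρ) = ampDamp (1 - η) ρ) ∧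
    (∃ D : Matrix (Fin 2) (Fin 2) ℂ → Matrix (Fin 2) (Fin 2) ℂ, IsCPTP D ∧
        ∀ ρ : Matrix (Fin 2) (Fin 2) ℂ,
          D (ampDamp η ρ) = ptraceB (ADV η * ρ * (ADV η)ᴴ)) := by
  refine ⟨fun ρ => comp_eq η hη0 (by linarith) ρ, fun ρ => comp2 η hη0 hη ρ,
    ampDamp ((1 - 2*η)/(1 - η)), ?_, fun ρ => ?_⟩
  · exact ampDamp_CPTP _ (div_nonneg (by linarith) (by linarith))
      (by rw [div_le_one (by linarith)]; linarith)
  · rw [comp2 η hη0 hη ρ, comp_eq η hη0 (by linarith) ρ]
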